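/- Fix μ ∈ ℝ. The map q ↦ B_μ(F_μ⁻¹(q)) is twice differentiable on (0,1) and, for every x ∈ ℝ, its second derivative evaluated at q = F_μ(x) equals −ρ/(σ·φ(Φ⁻¹(F_μ(x)))) + 1/(σ²·f_μ(x)). -/

import Mathlib

open MeasureTheory ProbabilityTheory Set Filter Topology

noncomputable def stdphi (x : ℝ) : ℝ := Real.exp (-(x ^ 2) / 2) / Real.sqrt (2 * Real.pi)

noncomputable def stdPhi (x : ℝ) : ℝ := ∫ t in Iic x, stdphi t

noncomputable def stdPhiInv : ℝ → ℝ := Function.invFun stdPhi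

noncomputable def stdPhiE (c : EReal) (x s : ℝ) : ℝ :=
  if c = ⊤ then 1 else if c = ⊥ then 0 else stdPhi ((c.toReal - x) / s)

def truncOrdered {k : ℕ} (a b : Fin k → EReal) : Prop :=
  (∀ i, a i < b i) ∧ ∀ i j : Fin k, i < j → b i < a j

def truncSet {k : ℕ} (a b : Fin k → EReal) : Set ℝ :=
  {x : ℝ | ∃ i, a i < (x : EReal) ∧ (x : EReal) < b i}

noncomputable def truncSum {k : ℕ} (a b : Fin k → EReal) (s x : ℝ) : ℝ :=
  ∑ i, (stdPhiE (b i) x s - stdPhiE (a i) x s)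

noncomputable def condPDF {k : ℕ} (a b : Fin k → EReal) (σ τ μ x : ℝ) : ℝ :=
  (1 / σ) * stdphi ((x - μ) / σ) * truncSum a b τ x
    / truncSum a b (Real.sqrt (σ ^ 2 + τ ^ 2)) μ

noncomputable def Fmu {k : ℕ} (a b : Fin k → EReal) (σ τ μ x : ℝ) : ℝ :=
  ∫ u in Iic x, condPDF a b σ τ μ u

/-- `G_μ(x,v) = Φ((x - (ρ²μ + (1-ρ²)v))/(σρ))` with `ρ² = τ²/(σ²+τ²)`. -/
noncomputable def Gfun (σ τ μ x v : ℝ) : ℝ :=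
  stdPhi ((x - (τ ^ 2 / (σ ^ 2 + τ ^ 2) * μ + (1 - τ ^ 2 / (σ ^ 2 + τ ^ 2)) * v)) /
    (σ * Real.sqrt (τ ^ 2 / (σ ^ 2 + τ ^ 2))))

/-- `G_μ(x,v)` for an extended-real `v`, with the natural conventions at `±∞`. -/
noncomputable def GfunE (σ τ μ x : ℝ) (c : EReal) : ℝ :=
  if c = ⊤ then 0 else if c = ⊥ then 1 else Gfun σ τ μ x c.toReal

/-- `h(v)` from Lemma `le_dmu_formula`. -/
noncomputable def hfun {k : ℕ} (a b : Fin k → EReal) (σ τ μ v : ℝ) : ℝ :=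
  (1 / Real.sqrt (σ ^ 2 + τ ^ 2)) * stdphi ((v - μ) / Real.sqrt (σ ^ 2 + τ ^ 2)) /
    truncSum a b (Real.sqrt (σ ^ 2 + τ ^ 2)) μ

/-- `h(v)` for an extended-real `v`, with the convention `φ(±∞) = 0`. -/
noncomputable def hfunE {k : ℕ} (a b : Fin k → EReal) (σ τ μ : ℝ) (c : EReal) : ℝ :=
  if c = ⊤ then 0 else if c = ⊥ then 0 else hfun a b σ τ μ c.toReal

/-- `l(x,v)` from Lemma `le_dens_dx`. -/
noncomputable def lfun {k : ℕ} (a b : Fin k → EReal) (τ x v : ℝ) : ℝ :=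
  (1 / τ) * stdphi ((v - x) / τ) / truncSum a b τ x

/-- `l(x,v)` for an extended-real `v`, with the convention `φ(±∞) = 0`. -/
noncomputable def lfunE {k : ℕ} (a b : Fin k → EReal) (τ x : ℝ) (c : EReal) : ℝ :=
  if c = ⊤ then 0 else if c = ⊥ then 0 else lfun a b τ x c.toReal

/-- The function `B_μ(x)` from the proof of Proposition 1. -/
noncomputable def Bfun {k : ℕ} (a b : Fin k → EReal) (σ τ μ x : ℝ) : ℝ :=
  Real.sqrt (τ ^ 2 / (σ ^ 2 + τ ^ 2)) / σ * stdphi (stdPhiInv (Fmu a b σ τ μ x))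
    - condPDF a b σ τ μ x
    + ∑ i, (hfunE a b σ τ μ (b i) * (Fmu a b σ τ μ x - GfunE σ τ μ x (b i))
        - hfunE a b σ τ μ (a i) * (Fmu a b σ τ μ x - GfunE σ τ μ x (a i)))

/-!
Write `x = F_μ⁻¹(q)` and `φ_w(t) = φ(t/w)/w`. The Gaussian identity
`φ_σ(x - μ) φ_τ(v - x) = φ_{√(σ²+τ²)}(v - μ) φ_{σρ}(x - ρ²μ - (1 - ρ²)v)`
says that `h(v) ∂ₓG_μ(x, v)` is `φ_σ(x - μ) φ_τ(v - x)` divided by the normalising constant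
of `f_μ`, so in `B_μ'` the boundary terms cancel the derivative of the truncation factor of `f_μ`,
leaving
`B_μ'(x) = f_μ(x) (-(ρ/σ) Φ⁻¹(F_μ(x)) + (x - μ)/σ² + Σᵢ (h(b_i) - h(a_i)))`.
By the inverse function rule, `q ↦ B_μ(F_μ⁻¹(q))` therefore has derivative
`-(ρ/σ) Φ⁻¹(q) + (F_μ⁻¹(q) - μ)/σ² + const`, and differentiating once more gives the claim.
Both inverse function rules need `F_μ` to take values in `(0, 1)`, i.e. `∫ f_μ = 1`; this is
`P(X + U ≤ c) = Φ((c - μ)/√(σ² + τ²))`, which follows from the same identity and Fubini.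
-/

lemma stdphi_pos (x : ℝ) : 0 < stdphi x := by
  unfold stdphi; positivity

@[fun_prop]
lemma continuous_stdphi : Continuous stdphi := by
  unfold stdphi; fun_prop

lemma hasDerivAt_stdphi (x : ℝ) : HasDerivAt stdphi (-x * stdphi x) x := by
  have h := (((hasDerivAt_pow 2 x).neg.div_const 2).exp).div_const (Real.sqrt (2 * Real.pi))
  exact h.congr_deriv (by unfold stdphi; simp only [Pi.neg_apply]; ring)

lemma scaled_stdphi_eq_gaussianPDFReal {w : ℝ} (hw : 0 < w) (m x : ℝ) :
    1 / w * stdphi ((x - m) / w) = gaussianPDFReal m (w ^ 2).toNNReal x := by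
  rw [gaussianPDFReal, Real.coe_toNNReal _ (sq_nonneg w), stdphi,
    Real.sqrt_mul' _ (sq_nonneg w), Real.sqrt_sq hw.le]
  field_simp

lemma integrable_scaled_stdphi {w : ℝ} (hw : 0 < w) (m : ℝ) :
    Integrable (fun x => 1 / w * stdphi ((x - m) / w)) := by
  simp_rw [scaled_stdphi_eq_gaussianPDFReal hw]
  exact integrable_gaussianPDFReal _ _

lemma integral_scaled_stdphi {w : ℝ} (hw : 0 < w) (m : ℝ) :
    ∫ x, 1 / w * stdphi ((x - m) / w) = 1 := by
  simp_rw [scaled_stdphi_eq_gaussianPDFReal hw]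
  exact integral_gaussianPDFReal_eq_one _ (by simp [hw.ne'])

lemma integrable_stdphi : Integrable stdphi := by
  simpa using integrable_scaled_stdphi one_pos 0

lemma integral_stdphi : ∫ x, stdphi x = 1 := by
  simpa using integral_scaled_stdphi one_pos 0

lemma Set.RightInvOn.hasDerivAt {F g : ℝ → ℝ} {U : Set ℝ} {q f' : ℝ}
    (hg : RightInvOn g F U) (hU : IsOpen U) (hq : q ∈ U)
    (hF : StrictMono F) (hFc : Continuous F) (hd : HasDerivAt F f' (g q)) (hf' : f' ≠ 0) :
    HasDerivAt g f'⁻¹ q := by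
  have hmono : StrictMonoOn g U := fun p hp p' hp' hpp' =>
    hF.lt_iff_lt.1 (by rwa [hg hp, hg hp'])
  have himage : g '' U = F ⁻¹' U := by
    ext x
    refine ⟨?_, fun hx => ⟨F x, hx, hF.injective (hg hx)⟩⟩
    rintro ⟨p, hp, rfl⟩
    simpa [hg hp] using hp
  have hcont : ContinuousAt g q := by
    refine hmono.continuousAt_of_image_mem_nhds (hU.mem_nhds hq) ?_
    rw [himage]
    exact (hU.preimage hFc).mem_nhds (by simpa [hg hq] using hq)
  exact hd.of_local_left_inverse hcont hf' (eventually_of_mem (hU.mem_nhds hq) hg)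

section IntegralIic

variable {g : ℝ → ℝ}

lemma hasDerivAt_integral_Iic (hi : Integrable g) {x : ℝ} (hc : ContinuousAt g x) :
    HasDerivAt (fun y => ∫ u in Iic y, g u) (g x) x := by
  have h := (intervalIntegral.integral_hasDerivAt_right (a := 0) hi.intervalIntegrable
    hi.aestronglyMeasurable.stronglyMeasurableAtFilter hc).const_add (∫ u in Iic 0, g u)
  refine h.congr_of_eventuallyEq (Eventually.of_forall fun y => ?_)
  simp only [← intervalIntegral.integral_Iic_sub_Iic hi.integrableOn hi.integrableOn,
    add_sub_cancel]

lemma strictMono_integral_Iic (hi : Integrable g) (hg : ∀ x, 0 < g x) :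
    StrictMono fun y => ∫ u in Iic y, g u := by
  intro x y hxy
  have h := intervalIntegral.intervalIntegral_pos_of_pos_on hi.intervalIntegrable
    (fun u _ => hg u) hxy
  rw [← intervalIntegral.integral_Iic_sub_Iic hi.integrableOn hi.integrableOn] at h
  exact sub_pos.1 h

lemma integral_Iic_mem_Ioo (hi : Integrable g) (hg : ∀ x, 0 < g x) (x : ℝ) :
    ∫ u in Iic x, g u ∈ Ioo 0 (∫ u, g u) := by
  have hmono := strictMono_integral_Iic hi hg
  constructor
  · calc 0 ≤ ∫ u in Iic (x - 1), g u := setIntegral_nonneg measurableSet_Iic fun u _ => (hg u).le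
      _ < ∫ u in Iic x, g u := hmono (sub_one_lt x)
  · calc ∫ u in Iic x, g u < ∫ u in Iic (x + 1), g u := hmono (lt_add_one x)
      _ ≤ ∫ u, g u := setIntegral_le_integral hi (Eventually.of_forall fun u => (hg u).le)

end IntegralIic

lemma hasDerivAt_stdPhi (x : ℝ) : HasDerivAt stdPhi (stdphi x) x :=
  hasDerivAt_integral_Iic integrable_stdphi continuous_stdphi.continuousAt

lemma continuous_stdPhi : Continuous stdPhi :=
  continuous_iff_continuousAt.2 fun x => (hasDerivAt_stdPhi x).continuousAt

lemma strictMono_stdPhi : StrictMono stdPhi :=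
  strictMono_integral_Iic integrable_stdphi stdphi_pos

lemma stdPhi_mem_Ioo (x : ℝ) : stdPhi x ∈ Ioo 0 1 := by
  have h := integral_Iic_mem_Ioo integrable_stdphi stdphi_pos x
  rwa [integral_stdphi] at h

lemma Ioo_subset_range_stdPhi : Ioo 0 1 ⊆ range stdPhi := by
  rw [← image_univ]
  refine isPreconnected_univ.intermediate_value_Ioo (l₁ := atBot) (l₂ := atTop)
    (le_principal_iff.2 univ_mem) (le_principal_iff.2 univ_mem) continuous_stdPhi.continuousOn
    (tendsto_integral_Iic_zero tendsto_id) ?_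
  have h := (aecover_Iic tendsto_id).integral_tendsto_of_countably_generated integrable_stdphi
  rwa [integral_stdphi] at h

lemma rightInvOn_stdPhiInv : RightInvOn stdPhiInv stdPhi (Ioo 0 1) :=
  fun _ hq => Function.invFun_eq (Ioo_subset_range_stdPhi hq)

lemma hasDerivAt_stdPhiInv {q : ℝ} (hq : q ∈ Ioo 0 1) :
    HasDerivAt stdPhiInv (stdphi (stdPhiInv q))⁻¹ q :=
  rightInvOn_stdPhiInv.hasDerivAt isOpen_Ioo hq strictMono_stdPhi continuous_stdPhi
    (hasDerivAt_stdPhi _) (stdphi_pos _).ne'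

lemma hasDerivAt_stdPhi_div_sub (m w x : ℝ) :
    HasDerivAt (fun y => stdPhi ((y - m) / w)) (1 / w * stdphi ((x - m) / w)) x :=
  ((hasDerivAt_stdPhi _).comp x (((hasDerivAt_id x).sub_const m).div_const w)).congr_deriv
    (by simp only [id]; ring)

lemma integral_Iic_scaled_stdphi {w : ℝ} (hw : 0 < w) (m x : ℝ) :
    ∫ u in Iic x, 1 / w * stdphi ((u - m) / w) = stdPhi ((x - m) / w) := by
  have hlim : Tendsto (fun u => stdPhi ((u - m) / w)) atBot (𝓝 0) :=
    tendsto_integral_Iic_zero ((tendsto_atBot_add_const_right _ (-m) tendsto_id).atBot_div_const hw)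
  rw [integral_Iic_of_hasDerivAt_of_tendsto' (fun u _ => hasDerivAt_stdPhi_div_sub m w u)
    (integrable_scaled_stdphi hw m).integrableOn hlim, sub_zero]

lemma stdphi_mul_stdphi (u v : ℝ) :
    stdphi u * stdphi v = Real.exp (-(u ^ 2 + v ^ 2) / 2) / (2 * Real.pi) := by
  unfold stdphi
  rw [div_mul_div_comm, Real.mul_self_sqrt (by positivity), ← Real.exp_add]
  ring_nf

lemma scaled_stdphi_mul_scaled_stdphi {σ τ : ℝ} (hσ : 0 < σ) (hτ : 0 < τ) (μ c x : ℝ) :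
    1 / σ * stdphi ((x - μ) / σ) * (1 / τ * stdphi ((c - x) / τ)) =
      1 / √(σ ^ 2 + τ ^ 2) * stdphi ((c - μ) / √(σ ^ 2 + τ ^ 2)) *
        (1 / (σ * √(τ ^ 2 / (σ ^ 2 + τ ^ 2))) *
          stdphi ((x - (τ ^ 2 / (σ ^ 2 + τ ^ 2) * μ + (1 - τ ^ 2 / (σ ^ 2 + τ ^ 2)) * c)) /
            (σ * √(τ ^ 2 / (σ ^ 2 + τ ^ 2))))) := by
  have hs : 0 < √(σ ^ 2 + τ ^ 2) := by positivity
  have hs2 : √(σ ^ 2 + τ ^ 2) ^ 2 = σ ^ 2 + τ ^ 2 := Real.sq_sqrt (by positivity)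
  rw [Real.sqrt_div' _ (by positivity), Real.sqrt_sq hτ.le]
  set s := √(σ ^ 2 + τ ^ 2)
  have hexp : ((x - μ) / σ) ^ 2 + ((c - x) / τ) ^ 2 = ((c - μ) / s) ^ 2 +
      ((x - (τ ^ 2 / (σ ^ 2 + τ ^ 2) * μ + (1 - τ ^ 2 / (σ ^ 2 + τ ^ 2)) * c)) /
        (σ * (τ / s))) ^ 2 := by
    simp only [div_pow, mul_pow, hs2]; field_simp; ring
  rw [mul_mul_mul_comm, mul_mul_mul_comm (1 / s), stdphi_mul_stdphi, stdphi_mul_stdphi, hexp]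
  congr 1
  field_simp

lemma stdPhiE_mem_Icc (c : EReal) (x s : ℝ) : stdPhiE c x s ∈ Icc 0 1 := by
  unfold stdPhiE
  split_ifs
  exacts [right_mem_Icc.2 zero_le_one, left_mem_Icc.2 zero_le_one,
    Ioo_subset_Icc_self (stdPhi_mem_Ioo _)]

lemma stdPhiE_lt_stdPhiE {c d : EReal} (h : c < d) (x : ℝ) {s : ℝ} (hs : 0 < s) :
    stdPhiE c x s < stdPhiE d x s := by
  induction c using EReal.rec <;> induction d using EReal.rec <;>
    simp_all [stdPhiE, (stdPhi_mem_Ioo _).1, (stdPhi_mem_Ioo _).2]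
  exact strictMono_stdPhi (div_lt_div_of_pos_right (sub_lt_sub_right h x) hs)

noncomputable def stdphiE (c : EReal) (x s : ℝ) : ℝ :=
  if c = ⊤ then 0 else if c = ⊥ then 0 else 1 / s * stdphi ((c.toReal - x) / s)

lemma hasDerivAt_stdPhiE (c : EReal) (x s : ℝ) :
    HasDerivAt (fun y => stdPhiE c y s) (-stdphiE c x s) x := by
  unfold stdPhiE stdphiE
  split_ifs
  · simpa using hasDerivAt_const x (1 : ℝ)
  · simpa using hasDerivAt_const x (0 : ℝ)
  · exact ((hasDerivAt_stdPhi _).comp x (((hasDerivAt_id x).const_sub _).div_const s)).congr_deriv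
      (by simp only [id]; ring)

lemma continuous_stdPhiE (c : EReal) (s : ℝ) : Continuous fun x => stdPhiE c x s :=
  continuous_iff_continuousAt.2 fun x => (hasDerivAt_stdPhiE c x s).continuousAt

lemma truncSum_pos {k : ℕ} [NeZero k] {a b : Fin k → EReal} (hab : ∀ i, a i < b i) {s : ℝ}
    (hs : 0 < s) (x : ℝ) : 0 < truncSum a b s x :=
  Finset.sum_pos (fun i _ => sub_pos.2 (stdPhiE_lt_stdPhiE (hab i) x hs)) Finset.univ_nonempty

lemma hasDerivAt_truncSum {k : ℕ} (a b : Fin k → EReal) (s x : ℝ) :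
    HasDerivAt (truncSum a b s) (∑ i, (stdphiE (a i) x s - stdphiE (b i) x s)) x := by
  unfold truncSum
  exact HasDerivAt.fun_sum fun i _ =>
    ((hasDerivAt_stdPhiE (b i) x s).sub (hasDerivAt_stdPhiE (a i) x s)).congr_deriv (by ring)

lemma integrable_scaled_stdphi_mul_stdPhiE {σ : ℝ} (hσ : 0 < σ) (μ τ : ℝ) (c : EReal) :
    Integrable fun x => 1 / σ * stdphi ((x - μ) / σ) * stdPhiE c x τ :=
  (integrable_scaled_stdphi hσ μ).mul_bdd (continuous_stdPhiE c τ).aestronglyMeasurable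
    (Eventually.of_forall fun x => by
      rw [Real.norm_of_nonneg (stdPhiE_mem_Icc c x τ).1]; exact (stdPhiE_mem_Icc c x τ).2)

section Convolution

variable {σ τ : ℝ} (hσ : 0 < σ) (hτ : 0 < τ) (μ : ℝ)
include hσ hτ

lemma integral_scaled_stdphi_mul_stdPhi (c : ℝ) :
    ∫ x, 1 / σ * stdphi ((x - μ) / σ) * stdPhi ((c - x) / τ) =
      stdPhi ((c - μ) / √(σ ^ 2 + τ ^ 2)) := by
  set F : ℝ → ℝ → ℝ := fun x y => 1 / σ * stdphi ((x - μ) / σ) * (1 / τ * stdphi ((y - x) / τ))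
  have hr : 0 < σ * √(τ ^ 2 / (σ ^ 2 + τ ^ 2)) := by positivity
  have hF_int : ∀ y, Integrable fun x => F x y := fun y => by
    simp only [F, scaled_stdphi_mul_scaled_stdphi hσ hτ]
    exact (integrable_scaled_stdphi hr _).const_mul _
  have hF_marginal : ∀ y, ∫ x, F x y = 1 / √(σ ^ 2 + τ ^ 2) * stdphi ((y - μ) / √(σ ^ 2 + τ ^ 2)) :=
    fun y => by
      simp only [F, scaled_stdphi_mul_scaled_stdphi hσ hτ]
      rw [integral_const_mul, integral_scaled_stdphi hr, mul_one]
  have hF_prod : Integrable (Function.uncurry F) (volume.prod (volume.restrict (Iic c))) := by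
    refine (integrable_prod_iff' (by unfold F; fun_prop)).2 ⟨Eventually.of_forall hF_int, ?_⟩
    have hnorm : ∀ x y, ‖F x y‖ = F x y := fun x y => Real.norm_of_nonneg <| by
      have := stdphi_pos ((x - μ) / σ); have := stdphi_pos ((y - x) / τ); positivity
    simp only [Function.uncurry_apply_pair, hnorm, hF_marginal]
    exact (integrable_scaled_stdphi (by positivity) μ).integrableOn
  calc ∫ x, 1 / σ * stdphi ((x - μ) / σ) * stdPhi ((c - x) / τ)
      = ∫ x, ∫ y in Iic c, F x y := by
        simp only [F, integral_const_mul, integral_Iic_scaled_stdphi hτ]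
    _ = ∫ y in Iic c, ∫ x, F x y := integral_integral_swap hF_prod
    _ = stdPhi ((c - μ) / √(σ ^ 2 + τ ^ 2)) := by
        simp only [hF_marginal, integral_Iic_scaled_stdphi (by positivity : 0 < √(σ ^ 2 + τ ^ 2))]

lemma integral_scaled_stdphi_mul_stdPhiE (c : EReal) :
    ∫ x, 1 / σ * stdphi ((x - μ) / σ) * stdPhiE c x τ = stdPhiE c μ √(σ ^ 2 + τ ^ 2) := by
  unfold stdPhiE
  split_ifs
  · simpa using integral_scaled_stdphi hσ μ
  · simp
  · exact integral_scaled_stdphi_mul_stdPhi hσ hτ μ _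

end Convolution

section CondPDF

variable {k : ℕ} {a b : Fin k → EReal} {σ τ : ℝ} (μ : ℝ)

lemma condPDF_eq_sum (x : ℝ) :
    condPDF a b σ τ μ x =
      (∑ i, (1 / σ * stdphi ((x - μ) / σ) * stdPhiE (b i) x τ
        - 1 / σ * stdphi ((x - μ) / σ) * stdPhiE (a i) x τ)) / truncSum a b √(σ ^ 2 + τ ^ 2) μ := by
  simp only [condPDF, truncSum, Finset.mul_sum, mul_sub]

lemma continuous_condPDF : Continuous (condPDF a b σ τ μ) := by
  have hT : Continuous (truncSum a b τ) :=
    continuous_iff_continuousAt.2 fun x => (hasDerivAt_truncSum a b τ x).continuousAt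
  unfold condPDF
  fun_prop

lemma hasDerivAt_condPDF (x : ℝ) :
    HasDerivAt (condPDF a b σ τ μ)
      (-(x - μ) / σ ^ 2 * condPDF a b σ τ μ x + 1 / σ * stdphi ((x - μ) / σ) *
        (∑ i, (stdphiE (a i) x τ - stdphiE (b i) x τ)) / truncSum a b √(σ ^ 2 + τ ^ 2) μ) x := by
  have hg := ((hasDerivAt_stdphi _).comp x
    (((hasDerivAt_id x).sub_const μ).div_const σ)).const_mul (1 / σ)
  exact ((hg.mul (hasDerivAt_truncSum a b τ x)).div_const _).congr_deriv
    (by simp only [condPDF, id, Function.comp_apply]; ring)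

variable (hσ : 0 < σ)
include hσ

lemma integrable_condPDF : Integrable (condPDF a b σ τ μ) := by
  have h : Integrable fun x => (∑ i, (1 / σ * stdphi ((x - μ) / σ) * stdPhiE (b i) x τ
      - 1 / σ * stdphi ((x - μ) / σ) * stdPhiE (a i) x τ)) / truncSum a b √(σ ^ 2 + τ ^ 2) μ :=
    (integrable_finsetSum _ fun i _ => (integrable_scaled_stdphi_mul_stdPhiE hσ μ τ _).sub
      (integrable_scaled_stdphi_mul_stdPhiE hσ μ τ _)).div_const _
  exact h.congr (ae_of_all _ fun x => (condPDF_eq_sum μ x).symm)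

lemma hasDerivAt_Fmu (x : ℝ) : HasDerivAt (Fmu a b σ τ μ) (condPDF a b σ τ μ x) x :=
  hasDerivAt_integral_Iic (integrable_condPDF μ hσ) (continuous_condPDF μ).continuousAt

lemma continuous_Fmu : Continuous (Fmu a b σ τ μ) :=
  continuous_iff_continuousAt.2 fun x => (hasDerivAt_Fmu μ hσ x).continuousAt

variable [NeZero k] (hab : ∀ i, a i < b i) (hτ : 0 < τ)
include hab hτ

lemma condPDF_pos (x : ℝ) : 0 < condPDF a b σ τ μ x := by
  have := truncSum_pos hab hτ x
  have := truncSum_pos hab (by positivity : 0 < √(σ ^ 2 + τ ^ 2)) μ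
  have := stdphi_pos ((x - μ) / σ)
  unfold condPDF
  positivity

lemma integral_condPDF : ∫ x, condPDF a b σ τ μ x = 1 := by
  simp_rw [condPDF_eq_sum]
  rw [integral_div, integral_finsetSum _ fun i _ => ?_]
  swap
  · exact (integrable_scaled_stdphi_mul_stdPhiE hσ μ τ _).sub
      (integrable_scaled_stdphi_mul_stdPhiE hσ μ τ _)
  simp only [integral_sub (integrable_scaled_stdphi_mul_stdPhiE hσ μ τ _)
    (integrable_scaled_stdphi_mul_stdPhiE hσ μ τ _), integral_scaled_stdphi_mul_stdPhiE hσ hτ]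
  exact div_self (truncSum_pos hab (by positivity) μ).ne'

lemma strictMono_Fmu : StrictMono (Fmu a b σ τ μ) :=
  strictMono_integral_Iic (integrable_condPDF μ hσ) (condPDF_pos μ hσ hab hτ)

lemma Fmu_mem_Ioo (x : ℝ) : Fmu a b σ τ μ x ∈ Ioo 0 1 := by
  have h := integral_Iic_mem_Ioo (integrable_condPDF μ hσ) (condPDF_pos μ hσ hab hτ) x
  rwa [integral_condPDF μ hσ hab hτ] at h

end CondPDF

noncomputable def GfunDerivE (σ τ μ x : ℝ) (c : EReal) : ℝ :=
  if c = ⊤ then 0 else if c = ⊥ then 0 else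
    1 / (σ * √(τ ^ 2 / (σ ^ 2 + τ ^ 2))) *
      stdphi ((x - (τ ^ 2 / (σ ^ 2 + τ ^ 2) * μ + (1 - τ ^ 2 / (σ ^ 2 + τ ^ 2)) * c.toReal)) /
        (σ * √(τ ^ 2 / (σ ^ 2 + τ ^ 2))))

lemma hasDerivAt_GfunE (σ τ μ : ℝ) (c : EReal) (x : ℝ) :
    HasDerivAt (fun y => GfunE σ τ μ y c) (GfunDerivE σ τ μ x c) x := by
  unfold GfunE GfunDerivE Gfun
  split_ifs
  · exact hasDerivAt_const x 0
  · exact hasDerivAt_const x 1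
  · exact hasDerivAt_stdPhi_div_sub _ _ x

section Bfun

variable {k : ℕ} {a b : Fin k → EReal} {σ τ : ℝ} (μ : ℝ) (hσ : 0 < σ) (hτ : 0 < τ)
include hσ hτ

lemma hfunE_mul_GfunDerivE (c : EReal) (x : ℝ) :
    hfunE a b σ τ μ c * GfunDerivE σ τ μ x c =
      1 / σ * stdphi ((x - μ) / σ) * stdphiE c x τ / truncSum a b √(σ ^ 2 + τ ^ 2) μ := by
  unfold hfunE GfunDerivE stdphiE hfun
  split_ifs
  · simp
  · simp
  · rw [mul_div_assoc, ← mul_div_right_comm, scaled_stdphi_mul_scaled_stdphi hσ hτ]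
    ring

variable [NeZero k] (hab : ∀ i, a i < b i)
include hab

lemma hasDerivAt_stdphi_stdPhiInv_Fmu (x : ℝ) :
    HasDerivAt (fun y => stdphi (stdPhiInv (Fmu a b σ τ μ y)))
      (-stdPhiInv (Fmu a b σ τ μ x) * condPDF a b σ τ μ x) x := by
  have h := (hasDerivAt_stdphi _).comp x
    ((hasDerivAt_stdPhiInv (Fmu_mem_Ioo μ hσ hab hτ x)).comp x (hasDerivAt_Fmu μ hσ x))
  have hφ := (stdphi_pos (stdPhiInv (Fmu a b σ τ μ x))).ne'
  exact h.congr_deriv (by simp only [Function.comp_apply]; field_simp)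

lemma hasDerivAt_Bfun {ρ : ℝ} (hρ : 0 < ρ) (hρ2 : ρ ^ 2 = τ ^ 2 / (σ ^ 2 + τ ^ 2)) (x : ℝ) :
    HasDerivAt (Bfun a b σ τ μ)
      (condPDF a b σ τ μ x * (-(ρ / σ) * stdPhiInv (Fmu a b σ τ μ x) + (x - μ) / σ ^ 2 +
        ∑ i, (hfunE a b σ τ μ (b i) - hfunE a b σ τ μ (a i)))) x := by
  have hF := hasDerivAt_Fmu μ hσ x (a := a) (b := b) (τ := τ)
  unfold Bfun
  refine ((((hasDerivAt_stdphi_stdPhiInv_Fmu μ hσ hτ hab x).const_mul _).sub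
    (hasDerivAt_condPDF μ x)).add (HasDerivAt.fun_sum fun i _ =>
      ((hF.sub (hasDerivAt_GfunE σ τ μ (b i) x)).const_mul _).sub
        ((hF.sub (hasDerivAt_GfunE σ τ μ (a i) x)).const_mul _))).congr_deriv ?_
  have hsum : ∑ i, (hfunE a b σ τ μ (b i) * (condPDF a b σ τ μ x - GfunDerivE σ τ μ x (b i)) -
      hfunE a b σ τ μ (a i) * (condPDF a b σ τ μ x - GfunDerivE σ τ μ x (a i))) =
      condPDF a b σ τ μ x * ∑ i, (hfunE a b σ τ μ (b i) - hfunE a b σ τ μ (a i)) +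
        1 / σ * stdphi ((x - μ) / σ) * (∑ i, (stdphiE (a i) x τ - stdphiE (b i) x τ)) /
          truncSum a b √(σ ^ 2 + τ ^ 2) μ := by
    simp only [mul_sub, hfunE_mul_GfunDerivE μ hσ hτ, Finset.mul_sum, Finset.sum_div,
      ← Finset.sum_add_distrib]
    exact Finset.sum_congr rfl fun i _ => by ring
  rw [hsum, ← hρ2, Real.sqrt_sq hρ.le]
  ring

end Bfun

/-- The map `q ↦ B_μ(F_μ⁻¹(q))` is twice differentiable on `(0,1)`; its second derivative at
`q = F_μ(x)` equals `-ρ/(σ φ(Φ⁻¹(F_μ(x)))) + 1/(σ² f_μ(x))`. -/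
theorem stmt12 {k : ℕ} (a b : Fin (k + 1) → EReal) (hab : truncOrdered a b)
    (σ τ ρ : ℝ) (hσ : 0 < σ) (hτ : 0 < τ)
    (hρ : 0 < ρ) (hρ2 : ρ ^ 2 = τ ^ 2 / (σ ^ 2 + τ ^ 2)) (μ : ℝ)
    (Finv : ℝ → ℝ) (hFinv : ∀ q ∈ Ioo (0 : ℝ) 1, Fmu a b σ τ μ (Finv q) = q) :
    ∃ D : ℝ → ℝ,
      (∀ q ∈ Ioo (0 : ℝ) 1, HasDerivAt (fun p => Bfun a b σ τ μ (Finv p)) (D q) q) ∧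
      ∀ x : ℝ,
        HasDerivAt D
          (-(ρ / (σ * stdphi (stdPhiInv (Fmu a b σ τ μ x))))
            + 1 / (σ ^ 2 * condPDF a b σ τ μ x)) (Fmu a b σ τ μ x) := by
  have hf := condPDF_pos μ hσ hab.1 hτ
  have hmem := Fmu_mem_Ioo μ hσ hab.1 hτ
  have hF := strictMono_Fmu μ hσ hab.1 hτ
  have hFinv_deriv : ∀ q ∈ Ioo 0 1, HasDerivAt Finv (condPDF a b σ τ μ (Finv q))⁻¹ q := fun q hq =>
    Set.RightInvOn.hasDerivAt hFinv isOpen_Ioo hq hF (continuous_Fmu μ hσ)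
      (hasDerivAt_Fmu μ hσ _) (hf _).ne'
  have hFinv_Fmu : ∀ x, Finv (Fmu a b σ τ μ x) = x := fun x => hF.injective (hFinv _ (hmem x))
  refine ⟨fun q => -(ρ / σ) * stdPhiInv q + (Finv q - μ) / σ ^ 2 +
    ∑ i, (hfunE a b σ τ μ (b i) - hfunE a b σ τ μ (a i)), fun q hq => ?_, fun x => ?_⟩
  · have h := (hasDerivAt_Bfun μ hσ hτ hab.1 hρ hρ2 (Finv q)).comp q (hFinv_deriv q hq)
    rw [hFinv q hq] at h
    exact h.congr_deriv (by field_simp [(hf (Finv q)).ne'])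
  · have h := ((((hasDerivAt_stdPhiInv (hmem x)).const_mul (-(ρ / σ))).add
      (((hFinv_deriv _ (hmem x)).sub_const μ).div_const (σ ^ 2))).add_const
        (∑ i, (hfunE a b σ τ μ (b i) - hfunE a b σ τ μ (a i))))
    rw [hFinv_Fmu] at h
    exact h.congr_deriv (by field_simp [(hf x).ne', (stdphi_pos (stdPhiInv (Fmu a b σ τ μ x))).ne'])
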